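/- Let n : ℕ with n ≥ 2, let H_J := −∑_{i=0}^{n−2} Z_i ∘ Z_{i+1}, and let i : Fin n with i ≤ n−2. Then the state m_i δ_{const false} obtained by applying the string operator m_i to the ground state δ_{const false} is an eigenvector of H_J with eigenvalue −(n−1) + 2: it is a single domain-wall (m-particle) excitation of energy 2 above the ground state energy. -/

import Mathlib

/-- The state space of the `n`-site spin chain. -/
abbrev SpinChain (n : ℕ) := (Fin n → Bool) → ℂ

/-- The Pauli operator `X_i`, flipping the `i`-th bit. -/
noncomputable def PauliX (n : ℕ) (i : Fin n) : Module.End ℂ (SpinChain n) where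
  toFun ψ := fun t => ψ (Function.update t i (!(t i)))
  map_add' _ _ := rfl
  map_smul' _ _ := rfl

/-- The Pauli operator `Z_i`. -/
noncomputable def PauliZ (n : ℕ) (i : Fin n) : Module.End ℂ (SpinChain n) where
  toFun ψ := fun t => (if t i then (-1 : ℂ) else 1) * ψ t
  map_add' ψ φ := by funext t; simp [mul_add]
  map_smul' c ψ := by
    funext t
    simp only [Pi.smul_apply, smul_eq_mul, RingHom.id_apply]
    ring

lemma pauliX_comm (n : ℕ) (a b : Fin n) : Commute (PauliX n a) (PauliX n b) := by
  rcases eq_or_ne a b with rfl | h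
  · exact Commute.refl _
  · refine LinearMap.ext fun ψ => funext fun t => ?_
    show (PauliX n a) ((PauliX n b) ψ) t = (PauliX n b) ((PauliX n a) ψ) t
    simp only [PauliX, LinearMap.coe_mk, AddHom.coe_mk]
    rw [Function.update_of_ne h, Function.update_of_ne h.symm,
      Function.update_comm h]

/-- The string operator `m_i = ∏_{k ≤ i} X_k`, the composite (in any order) of the
pairwise commuting operators `X_k` for `k ≤ i`. -/
noncomputable def stringM (n : ℕ) (i : Fin n) : Module.End ℂ (SpinChain n) :=
  (Finset.univ.filter (· ≤ i)).noncommProd (PauliX n)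
    (fun a _ b _ _ => pauliX_comm n a b)

/-- The global spin flip `U = ∏_{k} X_k`. -/
noncomputable def globalU (n : ℕ) : Module.End ℂ (SpinChain n) :=
  Finset.univ.noncommProd (PauliX n)
    (fun a _ b _ _ => pauliX_comm n a b)


lemma noncommProd_pauliX_apply (n : ℕ) (F : Finset (Fin n)) (ψ : SpinChain n) :
    F.noncommProd (PauliX n) (fun a _ b _ _ => pauliX_comm n a b) ψ =
    fun t => ψ (fun k => if k ∈ F then !t k else t k) := by
  classical
  induction F using Finset.induction with
  | empty =>
    funext t
    simp only [Finset.noncommProd_empty, Finset.notMem_empty, if_false]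
    rfl
  | @insert a F ha ih =>
    refine (congrFun (congrArg DFunLike.coe (Finset.noncommProd_insert_of_notMem _ _ _ _ ha)) ψ).trans ?_
    funext t
    show (F.noncommProd (PauliX n) _ ψ) (Function.update t a (!(t a))) = _
    rw [congrFun ih]
    congr 1
    funext k
    rcases eq_or_ne k a with rfl | hk
    · simp [ha, Function.update_self]
    · simp [Function.update_of_ne hk, Finset.mem_insert, hk]

/-- Applying the string operator `m_i` (with `i ≤ n - 2`) to the ground state
`δ_{const false}` of the `B = 0` Ising Hamiltonian produces an eigenvector with
eigenvalue `-(n-1) + 2`: a single domain-wall (`m`-particle) excitation of energy `2`. -/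
theorem stringM_creates_domain_wall (n : ℕ) (hn : 2 ≤ n) (i : Fin n) (hi : i.1 ≤ n - 2)
    (HJ : Module.End ℂ (SpinChain n))
    (hHJ : HJ = -∑ k ∈ (Finset.range (n - 1)).attach,
        PauliZ n ⟨k.1, by have := Finset.mem_range.mp k.2; omega⟩ *
        PauliZ n ⟨k.1 + 1, by have := Finset.mem_range.mp k.2; omega⟩)
    (δ : (Fin n → Bool) → SpinChain n)
    (hδ : ∀ t t', δ t t' = if t' = t then 1 else 0) :
    Module.End.HasEigenvector HJ (-((n : ℂ) - 1) + 2)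
      (stringM n i (δ (fun _ => false))) := by

  classical
  set s : Fin n → Bool := fun k => decide (k ≤ i) with hs
  have hstr : stringM n i (δ (fun _ => false)) = fun t => if t = s then (1 : ℂ) else 0 := by
    rw [stringM, noncommProd_pauliX_apply]
    funext t
    rw [hδ]
    congr 1
    simp only [eq_iff_iff]
    constructor
    · intro h
      funext k
      have hk := congrFun h k
      simp only [Finset.mem_filter, Finset.mem_univ, true_and] at hk
      by_cases hki : k ≤ i
      · simp [hki, hs] at hk ⊢
        cases hkk : t k
        · simp [hkk] at hk
        · rfl
      · simp [hki, hs] at hk ⊢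
        exact hk
    · intro h
      subst h
      funext k
      simp only [Finset.mem_filter, Finset.mem_univ, true_and, hs]
      by_cases hki : k ≤ i <;> simp [hki]
  rw [hstr]
  have hsne : (fun t => if t = s then (1 : ℂ) else 0) ≠ 0 := by
    intro h
    have := congrFun h s
    simp at this
  refine ⟨Module.End.mem_eigenspace_iff.mpr ?_, hsne⟩
  rw [hHJ]
  have happ : (∑ k ∈ (Finset.range (n - 1)).attach,
      PauliZ n ⟨k.1, by have := Finset.mem_range.mp k.2; omega⟩ *
      PauliZ n ⟨k.1 + 1, by have := Finset.mem_range.mp k.2; omega⟩)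
      (fun t => if t = s then (1 : ℂ) else 0)
      = ((n : ℂ) - 1 - 2) • (fun t => if t = s then (1 : ℂ) else 0) := by
    rw [LinearMap.sum_apply]
    funext t
    simp only [Finset.sum_apply, Pi.smul_apply, smul_eq_mul]
    rcases eq_or_ne t s with rfl | ht
    · have hterm : ∀ k ∈ (Finset.range (n - 1)).attach,
        (PauliZ n ⟨k.1, by have := Finset.mem_range.mp k.2; omega⟩ *
         PauliZ n ⟨k.1 + 1, by have := Finset.mem_range.mp k.2; omega⟩)
          (fun t => if t = s then (1 : ℂ) else 0) s
          = if k.1 = i.1 then (-1 : ℂ) else 1 := by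
        intro k _
        have hk2 := Finset.mem_range.mp k.2
        show (PauliZ n _) ((PauliZ n _) _) s = _
        simp only [PauliZ, LinearMap.coe_mk, AddHom.coe_mk, if_pos rfl]
        have h1 : s ⟨k.1, by omega⟩ = decide (k.1 ≤ i.1) := rfl
        have h2 : s ⟨k.1 + 1, by omega⟩ = decide (k.1 + 1 ≤ i.1) := rfl
        rw [h1, h2]
        rcases eq_or_ne k.1 i.1 with he | he
        · have hle : k.1 ≤ i.1 := he.le
          have hnle : ¬ (k.1 + 1 ≤ i.1) := by omega
          simp [hle, hnle, he]
        · by_cases hle : k.1 ≤ i.1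
          · have : k.1 + 1 ≤ i.1 := by omega
            simp [hle, this, he]
          · have : ¬ (k.1 + 1 ≤ i.1) := by omega
            simp [hle, this, he]
      rw [Finset.sum_congr rfl hterm]
      have hii : i.1 < n - 1 := by omega
      rw [Finset.sum_attach _ (fun j => if j = i.1 then (-1 : ℂ) else 1)]
      have hrw : ∀ x ∈ Finset.range (n - 1),
          (if x = i.1 then (-1 : ℂ) else 1) = 1 - (if x = i.1 then 2 else 0) := by
        intro x _; split <;> norm_num
      rw [Finset.sum_congr rfl hrw, Finset.sum_sub_distrib,
        Finset.sum_ite_eq' _ _ (fun _ => (2 : ℂ)), if_pos (Finset.mem_range.mpr hii),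
        Finset.sum_const]
      have hcast : ((n - 1 : ℕ) : ℂ) = (n : ℂ) - 1 := by
        push_cast [Nat.cast_sub (by omega : 1 ≤ n)]; ring
      simp [hcast]
    · have hterm : ∀ k ∈ (Finset.range (n - 1)).attach,
        (PauliZ n ⟨k.1, by have := Finset.mem_range.mp k.2; omega⟩ *
         PauliZ n ⟨k.1 + 1, by have := Finset.mem_range.mp k.2; omega⟩)
          (fun t' => if t' = s then (1 : ℂ) else 0) t = 0 := by
        intro k _
        show (PauliZ n _) ((PauliZ n _) _) t = _
        simp only [PauliZ, LinearMap.coe_mk, AddHom.coe_mk, if_neg ht, mul_zero]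
      rw [Finset.sum_congr rfl hterm]
      simp [ht]
  rw [LinearMap.neg_apply, happ]
  funext t
  simp only [Pi.neg_apply, Pi.smul_apply, smul_eq_mul]
  ring
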